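/- arXiv:0801.1462 — 2 statements merged into one kernel-verified Lean document; each statement's English description precedes it below -/
import Mathlib

section
/- Let R be a ring, F a class of left R-modules defining a homological dimension, closed under finite direct sums, and such that the class of homomorphic images of modules in F is closed under extensions. For a short exact sequence 0 → A → B → C → 0: if A and C have F-dimension ≤ i + 1, then B has F-dimension ≤ i + 1. -/
open CategoryTheory

universe u

noncomputable section

variable {R : Type u} [Ring R]

/-- Membership in `F ∪ {0}`. -/
def MemF0 (F : ModuleCat.{u} R → Prop) (M : ModuleCat.{u} R) : Prop :=
  F M ∨ Subsingleton M

/-- There is a short exact sequence `0 → A → B → C → 0`. -/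
def IsSES {R : Type u} [Ring R] (A B C : ModuleCat.{u} R) : Prop :=
  ∃ (f : A ⟶ B) (g : B ⟶ C),
    Function.Injective f ∧ Function.Surjective g ∧ Function.Exact f g

/-- `FDimLE F n M` : `M` has left `F`-dimension `≤ n`, i.e. there is an exact sequence
`0 → F_n → ⋯ → F_0 → M → 0` with all `F_j ∈ F ∪ {0}`. -/
def FDimLE (F : ModuleCat.{u} R → Prop) : ℕ → ModuleCat.{u} R → Prop
  | 0, M => MemF0 F M
  | n + 1, M => ∃ K F0 : ModuleCat.{u} R, MemF0 F F0 ∧ IsSES K F0 M ∧ FDimLE F n K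

/-- `M` admits a (possibly infinite) `F`-resolution `⋯ → F_1 → F_0 → M → 0`
with all terms in `F ∪ {0}`. -/
def HasFRes (F : ModuleCat.{u} R → Prop) (M : ModuleCat.{u} R) : Prop :=
  ∃ K Fo : ℕ → ModuleCat.{u} R, K 0 = M ∧
    ∀ n, MemF0 F (Fo n) ∧ IsSES (K (n + 1)) (Fo n) (K n)

/-- `IsFKernel F n K X` : there is an exact sequence
`0 → K → F_n → ⋯ → F_0 → X → 0` with all `F_i ∈ F`. -/
def IsFKernel (F : ModuleCat.{u} R → Prop) : ℕ → ModuleCat.{u} R → ModuleCat.{u} R → Prop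
  | 0, K, X => ∃ F0, F F0 ∧ IsSES K F0 X
  | n + 1, K, X => ∃ K1 F0, F F0 ∧ IsSES K1 F0 X ∧ IsFKernel F n K K1

/-- The class `F` defines a homological dimension. -/
def DefinesHomDim (F : ModuleCat.{u} R → Prop) : Prop :=
  (∀ K Fm M : ModuleCat.{u} R, F Fm → IsSES K Fm M → HasFRes F M → HasFRes F K) ∧
  (∀ (n : ℕ) (K X : ModuleCat.{u} R), FDimLE F (n + 1) X → IsFKernel F n K X → F K)

/-- `M` is a homomorphic image of a module in `F`. -/
def IsImageOfF (F : ModuleCat.{u} R → Prop) (M : ModuleCat.{u} R) : Prop :=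
  ∃ F0 : ModuleCat.{u} R, F F0 ∧ ∃ g : F0 ⟶ M, Function.Surjective g

/-- `F` is closed under finite (binary) direct sums. -/
def ClosedUnderFinSums (F : ModuleCat.{u} R → Prop) : Prop :=
  ∀ A B : ModuleCat.{u} R, F A → F B → F (ModuleCat.of R (A × B))

/-- The class of homomorphic images of modules in `F` is closed under extensions. -/
def ImagesClosedUnderExt (F : ModuleCat.{u} R → Prop) : Prop :=
  ∀ (A B C : ModuleCat.{u} R) (f : A ⟶ B) (g : B ⟶ C),
    Function.Injective f → Function.Surjective g → Function.Exact f g →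
      IsImageOfF F A → IsImageOfF F C → IsImageOfF F B

/-- `Ext^i(M, N)` vanishes. -/
def ExtZero {R : Type u} [Ring R] (i : ℕ) (M N : ModuleCat.{u} R) : Prop :=
  Subsingleton (((Ext ℤ (ModuleCat.{u} R) i).obj (Opposite.op M)).obj N)

end

/-!
Extension closure at level `n + 1` is proved by induction on `n`, together with the statement
`Q(n)`: in `0 → K → L → A → 0`, `dim L ≤ n` and `dim A ≤ n + 1` give `dim K ≤ n`.

Both rest on the syzygy lemma (an `F`-cover of a module of dimension `≤ n + 1` has a kernel of
dimension `≤ n`), which is what "defining a homological dimension" provides. For the extension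
`B` of `C` by `A`: since images of `F` are closed under extensions, some `G ∈ F` covers `B`; the
preimage `P` of `A` in `G` is a syzygy of `C`, so `dim P ≤ n`, and `Q(n)` applied to
`0 → ker (G → B) → P → A → 0` finishes. For `Q(n + 1)`: pull `L → A` back along a cover `G → A`;
the fibre product `D` is an extension of `L` by a syzygy of `A`, so `dim D ≤ n + 1`, and `K` is
the kernel of `D → G` with `G ∈ F`, which is handled by the syzygy lemma once more.
-/

open CategoryTheory Function

variable {R : Type u} [Ring R]

theorem isSES_zero_left (M : ModuleCat.{u} R) : IsSES (ModuleCat.of R PUnit) M M :=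
  ⟨0, 𝟙 M, fun _ _ _ => Subsingleton.elim _ _, fun m => ⟨m, rfl⟩,
    fun _ => ⟨fun hm => ⟨0, hm.symm⟩, fun ⟨_, hm⟩ => hm.symm⟩⟩

theorem isSES_ker {A B : ModuleCat.{u} R} (p : A ⟶ B) (hp : Surjective p) :
    IsSES (ModuleCat.of R (LinearMap.ker p.hom)) A B :=
  ⟨ModuleCat.ofHom (LinearMap.ker p.hom).subtype, p, Submodule.injective_subtype _, hp,
    LinearMap.exact_subtype_ker_map p.hom⟩

theorem IsSES.subsingleton_middle {A B C : ModuleCat.{u} R} [Subsingleton A] [Subsingleton C]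
    (h : IsSES A B C) : Subsingleton B := by
  obtain ⟨f, g, -, -, hfg⟩ := h
  refine ⟨fun b b' => ?_⟩
  obtain ⟨a, rfl⟩ := (hfg b).1 (Subsingleton.elim _ _)
  obtain ⟨a', rfl⟩ := (hfg b').1 (Subsingleton.elim _ _)
  rw [Subsingleton.elim a a']

def fiberProd {L M A : ModuleCat.{u} R} (v : L ⟶ A) (q : M ⟶ A) : ModuleCat.{u} R :=
  ModuleCat.of R
    (LinearMap.eqLocus (v.hom ∘ₗ LinearMap.fst R L M) (q.hom ∘ₗ LinearMap.snd R L M))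

section fiberProd

variable {K L M A : ModuleCat.{u} R}

theorem isSES_fiberProd_snd {u : K ⟶ L} {v : L ⟶ A} (q : M ⟶ A) (hu : Injective u)
    (hv : Surjective v) (huv : Exact u v) : IsSES K (fiberProd v q) M := by
  refine ⟨ModuleCat.ofHom
      (LinearMap.codRestrict _ (LinearMap.inl R L M ∘ₗ u.hom) fun k => ?_),
    ModuleCat.ofHom (LinearMap.snd R L M ∘ₗ Submodule.subtype _),
    fun k k' h => hu congr(($h).1.1), fun m => ?_, fun d => ?_⟩
  · show v (u k) = q 0
    rw [huv.apply_apply_eq_zero, map_zero]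
  · obtain ⟨l, hl⟩ := hv (q m)
    exact ⟨⟨(l, m), hl⟩, rfl⟩
  · refine ⟨fun hd => ?_, fun ⟨k, hk⟩ => hk ▸ rfl⟩
    have hd' : d.1.2 = 0 := hd
    obtain ⟨k, hk⟩ := (huv d.1.1).1 (by rw [show v d.1.1 = q d.1.2 from d.2, hd', map_zero])
    exact ⟨k, Subtype.ext (Prod.ext hk hd'.symm)⟩

theorem isSES_fiberProd_fst {s : K ⟶ M} {q : M ⟶ A} (v : L ⟶ A) (hs : Injective s)
    (hq : Surjective q) (hsq : Exact s q) : IsSES K (fiberProd v q) L := by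
  refine ⟨ModuleCat.ofHom
      (LinearMap.codRestrict _ (LinearMap.inr R L M ∘ₗ s.hom) fun k => ?_),
    ModuleCat.ofHom (LinearMap.fst R L M ∘ₗ Submodule.subtype _),
    fun k k' h => hs congr(($h).1.2), fun l => ?_, fun d => ?_⟩
  · show v 0 = q (s k)
    rw [hsq.apply_apply_eq_zero, map_zero]
  · obtain ⟨m, hm⟩ := hq (v l)
    exact ⟨⟨(l, m), hm.symm⟩, rfl⟩
  · refine ⟨fun hd => ?_, fun ⟨k, hk⟩ => hk ▸ rfl⟩
    have hd' : d.1.1 = 0 := hd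
    obtain ⟨k, hk⟩ := (hsq d.1.2).1 (by rw [← show v d.1.1 = q d.1.2 from d.2, hd', map_zero])
    exact ⟨k, Subtype.ext (Prod.ext hd'.symm hk)⟩

theorem isSES_fiberProd_of_injective {B C : ModuleCat.{u} R} {v : L ⟶ B} {f : A ⟶ B}
    {g : B ⟶ C} (hv : Surjective v) (hf : Injective f) (hg : Surjective g) (hfg : Exact f g) :
    IsSES (fiberProd v f) L C := by
  refine ⟨ModuleCat.ofHom (LinearMap.fst R L A ∘ₗ Submodule.subtype _), v ≫ g,
    fun d d' h => Subtype.ext (Prod.ext h (hf ?_)), hg.comp hv, fun l => ?_⟩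
  · rw [← show v d.1.1 = f d.1.2 from d.2, ← show v d'.1.1 = f d'.1.2 from d'.2]
    exact congrArg v h
  · refine ⟨fun hl => ?_, fun ⟨d, hd⟩ => ?_⟩
    · obtain ⟨a, ha⟩ := (hfg (v l)).1 hl
      exact ⟨⟨(l, a), ha.symm⟩, rfl⟩
    · rw [← hd]
      show g (v d.1.1) = 0
      rw [show v d.1.1 = f d.1.2 from d.2, hfg.apply_apply_eq_zero]

end fiberProd

theorem IsSES.exists_pullback {K L A Ka G : ModuleCat.{u} R} (hKLA : IsSES K L A)
    (hKaGA : IsSES Ka G A) : ∃ D, IsSES Ka D L ∧ IsSES K D G := by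
  obtain ⟨u, v, hu, hv, huv⟩ := hKLA
  obtain ⟨s, q, hs, hq, hsq⟩ := hKaGA
  exact ⟨fiberProd v q, isSES_fiberProd_fst v hs hq hsq, isSES_fiberProd_snd q hu hv huv⟩

theorem IsSES.exists_preimage {A B C Kp G : ModuleCat.{u} R} (hABC : IsSES A B C)
    (hKpGB : IsSES Kp G B) : ∃ P, IsSES P G C ∧ IsSES Kp P A := by
  obtain ⟨f, g, hf, hg, hfg⟩ := hABC
  obtain ⟨s, p, hs, hp, hsp⟩ := hKpGB
  exact ⟨fiberProd p f, isSES_fiberProd_of_injective hp hf hg hfg,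
    isSES_fiberProd_snd f hs hp hsp⟩

variable {F : ModuleCat.{u} R → Prop}

theorem FDimLE.of_subsingleton : ∀ (n : ℕ) (M : ModuleCat.{u} R) [Subsingleton M], FDimLE F n M
  | 0, _, h => .inr h
  | n + 1, M, h => ⟨ModuleCat.of R PUnit, M, .inr h, isSES_zero_left M, of_subsingleton n _⟩

theorem fdimLE_one_of_mem {G : ModuleCat.{u} R} (hG : F G) : FDimLE F 1 G :=
  ⟨ModuleCat.of R PUnit, G, .inl hG, isSES_zero_left G, .inr inferInstance⟩

theorem FDimLE.of_bijective {n : ℕ} {M N : ModuleCat.{u} R} {w : N ⟶ M} (hw : Bijective w)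
    (h : FDimLE F (n + 1) M) : FDimLE F (n + 1) N := by
  obtain ⟨K, G, hG, ⟨s, q, hs, hq, hsq⟩, hK⟩ := h
  let e := LinearEquiv.ofBijective w.hom hw
  exact ⟨K, G, hG, ⟨s, ModuleCat.ofHom (e.symm.toLinearMap ∘ₗ q.hom), hs,
    e.symm.surjective.comp hq, LinearEquiv.postcomp_exact_iff_exact.2 hsq⟩, hK⟩

theorem FDimLE.subsingleton_or_exists_cover {n : ℕ} {M : ModuleCat.{u} R}
    (h : FDimLE F (n + 1) M) :
    Subsingleton M ∨ ∃ K G, F G ∧ IsSES K G M ∧ FDimLE F n K := by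
  obtain ⟨K, G, hG | hG, hKGM, hK⟩ := h
  · exact .inr ⟨K, G, hG, hKGM, hK⟩
  · obtain ⟨-, q, -, hq, -⟩ := hKGM
    exact .inl hq.subsingleton

theorem FDimLE.isImageOfF_or_subsingleton {n : ℕ} {M : ModuleCat.{u} R}
    (h : FDimLE F (n + 1) M) : IsImageOfF F M ∨ Subsingleton M := by
  obtain h | ⟨K, G, hG, ⟨-, q, -, hq, -⟩, -⟩ := h.subsingleton_or_exists_cover
  · exact .inr h
  · exact .inl ⟨G, hG, q, hq⟩

theorem IsImageOfF.of_subsingleton {M : ModuleCat.{u} R} (h : IsImageOfF F M)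
    (N : ModuleCat.{u} R) [Subsingleton N] : IsImageOfF F N :=
  let ⟨G, hG, _⟩ := h
  ⟨G, hG, 0, fun _ => ⟨0, Subsingleton.elim _ _⟩⟩

theorem ImagesClosedUnderExt.isImageOfF_or_subsingleton (himg : ImagesClosedUnderExt F)
    {A B C : ModuleCat.{u} R} (hABC : IsSES A B C) (hA : IsImageOfF F A ∨ Subsingleton A)
    (hC : IsImageOfF F C ∨ Subsingleton C) : IsImageOfF F B ∨ Subsingleton B := by
  obtain ⟨f, g, hf, hg, hfg⟩ := hABC
  rcases hA with hA | hA <;> rcases hC with hC | hC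
  · exact .inl (himg A B C f g hf hg hfg hA hC)
  · exact .inl (himg A B C f g hf hg hfg hA (hA.of_subsingleton C))
  · exact .inl (himg A B C f g hf hg hfg (hC.of_subsingleton A) hC)
  · exact .inr (IsSES.subsingleton_middle ⟨f, g, hf, hg, hfg⟩)

theorem HasFRes.cons {K G M : ModuleCat.{u} R} (hG : MemF0 F G) (hKGM : IsSES K G M)
    (hK : HasFRes F K) : HasFRes F M := by
  obtain ⟨Kr, Fo, rfl, hres⟩ := hK
  exact ⟨fun | 0 => M | m + 1 => Kr m, fun | 0 => G | m + 1 => Fo m, rfl,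
    fun | 0 => ⟨hG, hKGM⟩ | m + 1 => hres m⟩

theorem hasFRes_zero : HasFRes F (ModuleCat.of R PUnit.{u + 1}) :=
  ⟨fun _ => ModuleCat.of R PUnit, fun _ => ModuleCat.of R PUnit, rfl,
    fun _ => ⟨.inr inferInstance, isSES_zero_left _⟩⟩

theorem FDimLE.hasFRes : ∀ {n : ℕ} {M : ModuleCat.{u} R}, FDimLE F n M → HasFRes F M
  | 0, M, h => .cons h (isSES_zero_left M) hasFRes_zero
  | _ + 1, _, ⟨_, _, hG, hKGM, hK⟩ => .cons hG hKGM hK.hasFRes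

theorem isFKernel_of_resolution {n : ℕ} {X G : ModuleCat.{u} R} {Kr Fo : ℕ → ModuleCat.{u} R}
    (hG : F G) (hKGX : IsSES (Kr 0) G X) (hres : ∀ m, IsSES (Kr (m + 1)) (Fo m) (Kr m))
    (hFo : ∀ m < n, F (Fo m)) : IsFKernel F n (Kr n) X := by
  induction n generalizing X G Kr Fo with
  | zero => exact ⟨G, hG, hKGX⟩
  | succ n ih =>
    exact ⟨Kr 0, G, hG, hKGX, ih (Kr := fun m => Kr (m + 1)) (Fo := fun m => Fo (m + 1))
      (hFo 0 n.succ_pos) (hres 0) (fun m => hres (m + 1)) fun m hm => hFo (m + 1) (by omega)⟩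

theorem fdimLE_of_resolution {Kr Fo : ℕ → ModuleCat.{u} R}
    (hres : ∀ m, MemF0 F (Fo m) ∧ IsSES (Kr (m + 1)) (Fo m) (Kr m)) :
    ∀ (j m : ℕ), FDimLE F m (Kr j) → FDimLE F (m + j) (Kr 0)
  | 0, _, h => h
  | j + 1, m, h => by
    rw [← Nat.succ_add_eq_add_succ]
    exact fdimLE_of_resolution hres j (m + 1) ⟨_, _, (hres j).1, (hres j).2, h⟩

theorem FDimLE.ker_of_cover (hF : DefinesHomDim F) {n : ℕ} {K G X : ModuleCat.{u} R}
    (hX : FDimLE F (n + 1) X) (hG : F G) (hKGX : IsSES K G X) : FDimLE F n K := by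
  obtain ⟨Kr, Fo, rfl, hres⟩ := hF.1 _ G X hG hKGX hX.hasFRes
  by_cases hFo : ∀ m < n, F (Fo m)
  · have hKn : F (Kr n) :=
      hF.2 n _ X hX (isFKernel_of_resolution hG hKGX (fun m => (hres m).2) hFo)
    simpa using fdimLE_of_resolution hres n 0 (.inl hKn)
  · -- a zero term `Fo m` forces `Kr (m + 1) = 0`, so the resolution may stop there
    push Not at hFo
    obtain ⟨m, hmn, hm⟩ := hFo
    have : Subsingleton (Kr (m + 1)) := by
      have : Subsingleton (Fo m) := (hres m).1.resolve_left hm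
      obtain ⟨i, -, hi, -, -⟩ := (hres m).2
      exact hi.subsingleton
    have := fdimLE_of_resolution hres (m + 1) (n - (m + 1)) (.of_subsingleton _ _)
    rwa [Nat.sub_add_cancel hmn] at this

theorem FDimLE.ker_of_mem (hF : DefinesHomDim F) {m : ℕ} {K D G : ModuleCat.{u} R}
    (hD : FDimLE F (m + 1) D) (hG : F G) (hKDG : IsSES K D G) : FDimLE F (m + 1) K := by
  obtain hD | ⟨Kd, Gd, hGd, hKdGdD, hKd⟩ := hD.subsingleton_or_exists_cover
  · obtain ⟨i, -, hi, -, -⟩ := hKDG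
    have : Subsingleton K := hi.subsingleton
    exact .of_subsingleton _ _
  · obtain ⟨P, hPGdG, hKdPK⟩ := hKDG.exists_preimage hKdGdD
    exact ⟨Kd, P, (fdimLE_one_of_mem hG).ker_of_cover hF hGd hPGdG, hKdPK, hKd⟩

def KernelBound (F : ModuleCat.{u} R → Prop) (n : ℕ) : Prop :=
  ∀ ⦃K L A : ModuleCat.{u} R⦄,
    IsSES K L A → FDimLE F n L → FDimLE F (n + 1) A → FDimLE F n K

theorem FDimLE.succ_of_isSES (hF : DefinesHomDim F) (himg : ImagesClosedUnderExt F) {n : ℕ}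
    (hQ : KernelBound F n) {A B C : ModuleCat.{u} R} (hABC : IsSES A B C)
    (hA : FDimLE F (n + 1) A) (hC : FDimLE F (n + 1) C) : FDimLE F (n + 1) B := by
  obtain ⟨G, hG, p, hp⟩ | hB := himg.isImageOfF_or_subsingleton hABC
    hA.isImageOfF_or_subsingleton hC.isImageOfF_or_subsingleton
  · obtain ⟨P, hPGC, hKPA⟩ := hABC.exists_preimage (isSES_ker p hp)
    exact ⟨_, G, .inl hG, isSES_ker p hp, hQ hKPA (hC.ker_of_cover hF hG hPGC) hA⟩
  · exact .of_subsingleton _ _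

theorem kernelBound (hF : DefinesHomDim F) (himg : ImagesClosedUnderExt F) :
    ∀ n, KernelBound F n
  | 0, K, L, A, ⟨u, v, hu, hv, huv⟩, hL, hA => by
    obtain hL | hL := hL
    · exact .inl (hF.2 0 K A hA ⟨L, hL, u, v, hu, hv, huv⟩)
    · exact .inr hu.subsingleton
  | n + 1, K, L, A, hKLA, hL, hA => by
    obtain hA0 | ⟨Ka, G, hG, hKaGA, hKa⟩ := hA.subsingleton_or_exists_cover
    · obtain ⟨u, v, hu, -, huv⟩ := hKLA
      exact hL.of_bijective
        ⟨hu, (LinearMap.surjective_iff_eq_zero_of_exact huv).2 (Subsingleton.elim _ _)⟩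
    · obtain ⟨D, hKaDL, hKDG⟩ := hKLA.exists_pullback hKaGA
      have hD := FDimLE.succ_of_isSES hF himg (kernelBound hF himg n) hKaDL hKa hL
      exact hD.ker_of_mem hF hG hKDG

theorem stmt6_general {R : Type u} [Ring R] (F : ModuleCat.{u} R → Prop)
    (hF : DefinesHomDim F)
    (himg : ImagesClosedUnderExt F)
    (A B C : ModuleCat.{u} R) (f : A ⟶ B) (g : B ⟶ C)
    (hinj : Function.Injective f) (hsurj : Function.Surjective g)
    (hex : Function.Exact f g) (i : ℕ)
    (hA : FDimLE F (i + 1) A) (hC : FDimLE F (i + 1) C) :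
    FDimLE F (i + 1) B :=
  FDimLE.succ_of_isSES hF himg (kernelBound hF himg i) ⟨f, g, hinj, hsurj, hex⟩ hA hC

theorem stmt6 {R : Type u} [Ring R] (F : ModuleCat.{u} R → Prop)
    (hF : DefinesHomDim F) (hsum : ClosedUnderFinSums F)
    (himg : ImagesClosedUnderExt F)
    (A B C : ModuleCat.{u} R) (f : A ⟶ B) (g : B ⟶ C)
    (hinj : Function.Injective f) (hsurj : Function.Surjective g)
    (hex : Function.Exact f g) (i : ℕ)
    (hA : FDimLE F (i + 1) A) (hC : FDimLE F (i + 1) C) :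
    FDimLE F (i + 1) B :=
  stmt6_general F hF himg A B C f g hinj hsurj hex i hA hC
end

section
/- Let R be a ring and suppose (A, B) is a cotorsion pair such that A defines a homological dimension. Then the cotorsion pair is hereditary, i.e., Ext^i_R(A, B) = 0 for all i ≥ 1, A ∈ A, B ∈ B. -/
/-!
Induction on `i`, the case `i = 1` being the definition of `A`. Given `a ∈ A`, choose
`0 → K → P → a → 0` with `P` free. Since `Ext¹(P, -) = 0`, `P ∈ A`; and `a` has `A`-dimension
`≤ 1`, so the second axiom of a homological dimension puts `K` in `A`. Splicing a projective
resolution of `K` with this sequence yields one of `a`, whence `Ext^{i+1}(a, b) ≅ Ext^i(K, b)`,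
which vanishes by induction.
-/

open CategoryTheory

universe u

open Limits Opposite

namespace CategoryTheory.ProjectiveResolution

variable {C : Type*} [Category C] [Abelian C]

-- `P.π.f 0`, but with target `Z` itself rather than `((single₀ C).obj Z).X 0`.
noncomputable def augmentation {Z : C} (P : ProjectiveResolution Z) : P.complex.X 0 ⟶ Z :=
  ChainComplex.toSingle₀Equiv _ _ P.π

@[simp]
lemma d_comp_augmentation {Z : C} (P : ProjectiveResolution Z) :
    P.complex.d 1 0 ≫ P.augmentation = 0 :=
  (ChainComplex.toSingle₀Equiv _ _ P.π).2

instance {Z : C} (P : ProjectiveResolution Z) : Epi P.augmentation :=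
  inferInstanceAs (Epi (P.π.f 0))

variable {S : ShortComplex C} (P : ProjectiveResolution S.X₁)

lemma d_comp_augmentation_comp_f : P.complex.d 1 0 ≫ P.augmentation ≫ S.f = 0 := by
  rw [← Category.assoc, d_comp_augmentation, zero_comp]

lemma exact_augmentation_comp_f (hS : S.ShortExact) :
    (ShortComplex.mk (P.augmentation ≫ S.f) S.g (by simp)).Exact :=
  (ShortComplex.exact_iff_of_epi_of_isIso_of_mono
    (ShortComplex.Hom.mk (S₁ := ShortComplex.mk (P.augmentation ≫ S.f) S.g (by simp)) (S₂ := S)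
      P.augmentation (𝟙 _) (𝟙 _) (by simp) (by simp))).2 hS.exact

lemma exact_d_augmentation_comp_f [Mono S.f] :
    (ShortComplex.mk _ _ P.d_comp_augmentation_comp_f).Exact :=
  (ShortComplex.exact_iff_of_epi_of_isIso_of_mono
    (ShortComplex.Hom.mk (S₁ := ShortComplex.mk _ _ P.d_comp_augmentation)
      (S₂ := ShortComplex.mk _ _ P.d_comp_augmentation_comp_f)
      (𝟙 _) (𝟙 _) S.f (by simp) (by simp))).1 P.exact₀

noncomputable def ofShortExact (hS : S.ShortExact) [Projective S.X₂] :
    ProjectiveResolution S.X₃ where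
  complex := P.complex.augment (P.augmentation ≫ S.f) P.d_comp_augmentation_comp_f
  projective := by rintro (_ | n) <;> dsimp [ChainComplex.augment] <;> infer_instance
  π := (ChainComplex.toSingle₀Equiv _ _).symm
    ⟨S.g, by erw [ChainComplex.augment_d_one_zero, Category.assoc, S.zero, comp_zero]⟩
  quasiIso := ⟨fun n => by
    cases n with
    | zero =>
      rw [ChainComplex.quasiIsoAt₀_iff, ShortComplex.quasiIso_iff_of_zeros']
      · refine (ShortComplex.exact_and_epi_g_iff_of_iso ?_).2
          ⟨P.exact_augmentation_comp_f hS, hS.epi_g⟩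
        refine ShortComplex.isoMk (Iso.refl _) (Iso.refl _) (Iso.refl _)
          ((Category.id_comp _).trans (Category.comp_id _).symm) ?_
        erw [Category.id_comp, Category.comp_id]
        exact (ChainComplex.toSingle₀Equiv_symm_apply_f_zero
          (C := P.complex.augment _ P.d_comp_augmentation_comp_f) S.g _).symm
      all_goals rfl
    | succ n =>
      rw [quasiIsoAt_iff_exactAt' _ _ (ChainComplex.exactAt_succ_single_obj _ _),
        HomologicalComplex.exactAt_iff' _ (n + 2) (n + 1) n (by simp) (by simp)]
      cases n with
      | zero =>
        have := hS.mono_f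
        exact P.exact_d_augmentation_comp_f
      | succ n => exact P.exact_succ n⟩

end CategoryTheory.ProjectiveResolution

-- The two short complexes computing these homologies coincide definitionally.
noncomputable def ChainComplex.augmentLinearYonedaObjHomologyIso (R : Type*) [Ring R]
    {C : Type*} [Category C] [Abelian C] [Linear R C] (K : ChainComplex C ℕ) {X : C}
    (f : K.X 0 ⟶ X) (w : K.d 1 0 ≫ f = 0) (Y : C) (n : ℕ) :
    ((K.augment f w).linearYonedaObj R Y).homology (n + 2) ≅
      (K.linearYonedaObj R Y).homology (n + 1) :=
  HomologicalComplex.homologyIsoSc' _ (n + 1) (n + 2) (n + 3) (by simp) (by simp) ≪≫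
    (HomologicalComplex.homologyIsoSc' (K.linearYonedaObj R Y) n (n + 1) (n + 2)
      (CochainComplex.prev_nat_succ n) (CochainComplex.next ℕ _)).symm

noncomputable def extSuccSuccIsoOfShortExact (R : Type*) [Ring R] {C : Type*} [Category C]
    [Abelian C] [Linear R C] [EnoughProjectives C] {S : ShortComplex C} (hS : S.ShortExact)
    [Projective S.X₂] (Y : C) (n : ℕ) :
    ((Ext R C (n + 2)).obj (op S.X₃)).obj Y ≅ ((Ext R C (n + 1)).obj (op S.X₁)).obj Y :=
  let P := ProjectiveResolution.of S.X₁
  (P.ofShortExact hS).isoExt (n + 2) Y ≪≫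
    P.complex.augmentLinearYonedaObjHomologyIso R _ P.d_comp_augmentation_comp_f Y n ≪≫
    (P.isoExt (n + 1) Y).symm

section ModuleCat

variable {R : Type u} [Ring R]

lemma extZero_succ_of_projective (P Y : ModuleCat.{u} R) [Projective P] (n : ℕ) :
    ExtZero (n + 1) P Y :=
  ModuleCat.subsingleton_of_isZero (isZero_Ext_succ_of_projective P Y n)

lemma extZero_succ_succ_iff {S : ShortComplex (ModuleCat.{u} R)} (hS : S.ShortExact)
    [Projective S.X₂] (Y : ModuleCat.{u} R) (n : ℕ) :
    ExtZero (n + 2) S.X₃ Y ↔ ExtZero (n + 1) S.X₁ Y := by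
  simp only [ExtZero, ← ModuleCat.isZero_iff_subsingleton]
  exact (extSuccSuccIsoOfShortExact ℤ hS Y n).isZero_iff

lemma isSES_of_shortExact {S : ShortComplex (ModuleCat.{u} R)} (hS : S.ShortExact) :
    IsSES S.X₁ S.X₂ S.X₃ :=
  ⟨S.f, S.g, hS.injective_f, hS.surjective_g,
    (ShortComplex.ShortExact.moduleCat_exact_iff_function_exact S).1 hS.exact⟩

lemma fDimLE_one_of_mem {F : ModuleCat.{u} R → Prop} {M : ModuleCat.{u} R} (hM : F M) :
    FDimLE F 1 M := by
  refine ⟨_, M, Or.inl hM,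
    isSES_of_shortExact (LinearMap.shortExact_shortComplexKer (f := LinearMap.id (R := R) (M := M))
      Function.surjective_id), Or.inr ?_⟩
  show Subsingleton (LinearMap.ker (LinearMap.id : M →ₗ[R] M))
  rw [LinearMap.ker_id]
  infer_instance

lemma DefinesHomDim.mem_of_isSES {F : ModuleCat.{u} R → Prop} (hF : DefinesHomDim F)
    {K P M : ModuleCat.{u} R} (hP : F P) (hM : F M) (hKPM : IsSES K P M) : F K :=
  hF.2 0 K M (fDimLE_one_of_mem hM) ⟨P, hP, hKPM⟩

end ModuleCat

theorem stmt16_general {R : Type u} [Ring R] (A B : ModuleCat.{u} R → Prop)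
    (hA : ∀ M : ModuleCat.{u} R, A M ↔ ∀ b, B b → ExtZero 1 M b)
    (hdim : DefinesHomDim A) :
    ∀ i, 1 ≤ i → ∀ a b, A a → B b → ExtZero i a b := by
  have hproj (P : ModuleCat.{u} R) [Projective P] : A P :=
    (hA P).2 fun b _ => extZero_succ_of_projective P b 0
  suffices ∀ n a b, A a → B b → ExtZero (n + 1) a b by
    intro i hi
    obtain ⟨n, rfl⟩ := Nat.exists_eq_add_of_le' hi
    exact this n
  intro n
  induction n with
  | zero => exact fun a b ha hb => (hA a).1 ha b hb
  | succ n ih =>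
    intro a b ha hb
    have hS := LinearMap.shortExact_shortComplexKer
      (Finsupp.linearCombination_id_surjective R a)
    have : Projective (ModuleCat.of R (a →₀ R)) :=
      ModuleCat.projective_of_free Finsupp.basisSingleOne
    have hK := hdim.mem_of_isSES (hproj _) ha (isSES_of_shortExact hS)
    exact (extZero_succ_succ_iff hS b n).2 (ih _ b hK hb)

theorem stmt16 {R : Type u} [Ring R] (A B : ModuleCat.{u} R → Prop)
    (hA : ∀ M : ModuleCat.{u} R, A M ↔ ∀ b, B b → ExtZero 1 M b)
    (hB : ∀ M : ModuleCat.{u} R, B M ↔ ∀ a, A a → ExtZero 1 a M)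
    (hdim : DefinesHomDim A) :
    ∀ i, 1 ≤ i → ∀ a b, A a → B b → ExtZero i a b :=
  stmt16_general A B hA hdim
end
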